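/- Let d, m ≥ 1. Let N : Fin m → Matrix (Fin d) (Fin d) ℂ satisfy Σ_i N_iᴴ N_i = I, let M₀, M₁ be d×d complex matrices with M₀ᴴM₀ + M₁ᴴM₁ = I, and define ℰ(ρ) = Σ_i N_i (M₁ ρ M₁ᴴ) N_iᴴ. Let A be any positive semidefinite d×d complex matrix. Then there exists a positive semidefinite d×d complex matrix B such that for every positive semidefinite d×d complex matrix ρ satisfying Σ_{k=0}^∞ tr(M₀ ℰ^k(ρ) M₀ᴴ) = tr(ρ), both families k ↦ tr(ℰ^k(ρ)) and k ↦ tr(A · M₁ ℰ^k(ρ) M₁ᴴ) are summable and Σ_{k=0}^∞ tr(ℰ^k(ρ)) + Σ_{k=0}^∞ tr(A · M₁ ℰ^k(ρ) M₁ᴴ) = tr(B ρ). -/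

import Mathlib

open Matrix
open scoped ComplexOrder

/-- The super-operator `ℰ(ρ) = Σ_i N_i (M₁ ρ M₁ᴴ) N_iᴴ` of one loop iteration. -/
noncomputable def loopStep {d m : ℕ} (N : Fin m → Matrix (Fin d) (Fin d) ℂ)
    (M₁ : Matrix (Fin d) (Fin d) ℂ) (σ : Matrix (Fin d) (Fin d) ℂ) :
    Matrix (Fin d) (Fin d) ℂ :=
  ∑ i, N i * (M₁ * σ * M₁ᴴ) * (N i)ᴴ

/-!
The inputs on which the trace of `ℰᵏ(ρ)` tends to zero form a convex cone `T` of positive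
matrices; the hypothesis on `ρ` says exactly that `ρ ∈ T`, because the trace lost in one iteration
is the trace of the exit branch `M₀ ρ M₀ᴴ`. In finite dimension `T` has a dominating element `u`:
writing `ρ ∈ T` in a basis of `span T` made of elements of `T` gives `ρ ≤ C ‖ρ‖ u`. As
`tr ℰᵏ(u) → 0`, some power `ℰᵖ` halves the trace of every element of `T`, so `ℰᵏ(ρ)` decays
geometrically and is summable.

Let `Q` be the support projection of `u`. Every `ρ ∈ T` is supported in `Q`, i.e. `ρ = Q ρ Q`, and
`Q ∈ T` itself. For a positive weight `G`, the compressions `Q (ℰ*)ᵏ(G) Q` of the dual iterates are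
positive with trace `tr(G ℰᵏ(Q))`, so they are summable, and their sum `B` satisfies
`tr(B ρ) = Σₖ tr(G ℰᵏ(ρ))` on `T`. The runtime observable is the sum of the observables obtained
for `G = 1` and `G = M₁ᴴ A M₁`.
-/

open Filter Topology

theorem PointedCone.exists_smul_norm_sub_mem {E : Type*} [NormedAddCommGroup E]
    [NormedSpace ℝ E] [FiniteDimensional ℝ E] (T : PointedCone ℝ E) :
    ∃ u ∈ T, ∃ C : ℝ, ∀ x ∈ T, (C * ‖x‖) • u - x ∈ T := by
  obtain ⟨b, hbT, hspan, hli⟩ := exists_linearIndependent ℝ (T : Set E)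
  have : Fintype b := @Fintype.ofFinite _ hli.finite
  let L := (Module.Basis.span hli).equivFun.toContinuousLinearEquiv.toContinuousLinearMap
  refine ⟨∑ v : b, (v : E), T.sum_mem fun v _ => hbT v.2, ‖L‖, fun x hx => ?_⟩
  have hxb : x ∈ Submodule.span ℝ (Set.range ((↑) : b → E)) := by
    rw [Subtype.range_coe, hspan]; exact Submodule.subset_span hx
  set c := L ⟨x, hxb⟩
  have hc : ∀ v, c v ≤ ‖L‖ * ‖x‖ := fun v =>
    (le_abs_self _).trans <| (norm_le_pi_norm c v).trans <| L.le_opNorm ⟨x, hxb⟩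
  have hxc : x = ∑ v, c v • (v : E) := by
    simpa [c, L, Module.Basis.span_apply] using
      congrArg Subtype.val ((Module.Basis.span hli).sum_equivFun ⟨x, hxb⟩).symm
  nth_rw 2 [hxc]
  rw [Finset.smul_sum, ← Finset.sum_sub_distrib]
  exact T.sum_mem fun v _ => by
    rw [← sub_smul]; exact T.smul_mem (sub_nonneg.2 (hc v)) (hbT v.2)

theorem summable_of_add_le_mul {f : ℕ → ℝ} {p : ℕ} {r : ℝ} (hf : ∀ k, 0 ≤ f k)
    (hp : 0 < p) (hr₀ : 0 < r) (hr₁ : r < 1) (h : ∀ k, f (k + p) ≤ r * f k) :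
    Summable f := by
  set s := r ^ (p⁻¹ : ℝ)
  have hs₀ : 0 ≤ s := by positivity
  have hsp : s ^ p = r := Real.rpow_inv_natCast_pow hr₀.le hp.ne'
  have hs₁ : s < 1 := by
    by_contra! hs; exact hr₁.not_ge (hsp ▸ one_le_pow₀ hs)
  set K := (∑ j ∈ Finset.range p, f j) / r
  have hbound : ∀ k, f k ≤ K * s ^ k := by
    intro k
    induction k using Nat.strong_induction_on with
    | _ k ih =>
      rcases lt_or_ge k p with hk | hk
      · calc f k ≤ ∑ j ∈ Finset.range p, f j :=
              Finset.single_le_sum (fun j _ => hf j) (Finset.mem_range.2 hk)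
          _ = K * s ^ p := by rw [hsp, div_mul_cancel₀ _ hr₀.ne']
          _ ≤ K * s ^ k := mul_le_mul_of_nonneg_left (pow_le_pow_of_le_one hs₀ hs₁.le hk.le)
            (div_nonneg (Finset.sum_nonneg fun j _ => hf j) hr₀.le)
      · obtain ⟨j, rfl⟩ := Nat.exists_eq_add_of_le' hk
        calc f (j + p) ≤ r * f j := h j
          _ ≤ r * (K * s ^ j) := by gcongr; exact ih j (by omega)
          _ = K * s ^ (j + p) := by rw [← hsp]; ring
  exact Summable.of_nonneg_of_le hf hbound
    ((summable_geometric_of_lt_one hs₀ hs₁).mul_left K)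

theorem tendsto_zero_of_tsum_eq_of_sub_succ {t m : ℕ → ℝ} (ht : ∀ k, 0 ≤ t k)
    (hm : ∀ k, 0 ≤ m k) (hstep : ∀ k, t (k + 1) = t k - m k) (hsum : ∑' k, m k = t 0) :
    Tendsto t atTop (𝓝 0) := by
  have hpartial : ∀ K, ∑ k ∈ Finset.range K, m k = t 0 - t K := by
    intro K
    rw [← Finset.sum_range_sub' t K]
    exact Finset.sum_congr rfl fun k _ => by rw [hstep]; ring
  have hm_sum : HasSum m (t 0) := by
    rw [← hsum]
    exact (summable_of_sum_range_le hm fun K => by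
      rw [hpartial]; linarith [ht K]).hasSum
  have := (tendsto_const_nhds (x := t 0)).sub hm_sum.tendsto_sum_nat
  simpa [hpartial] using this

namespace Matrix

theorem PosSemidef.norm_apply_sq_le {n : Type*} {A : Matrix n n ℂ} (hA : A.PosSemidef)
    (i j : n) : ‖A i j‖ ^ 2 ≤ (A i i).re * (A j j).re := by
  have hdet := (hA.submatrix ![i, j]).det_nonneg
  rw [det_fin_two] at hdet
  have hji : A j i = star (A i j) := by rw [← hA.1.apply]
  have hii : (A i i).im = 0 := Complex.conj_eq_iff_im.1 (hA.1.apply i i)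
  have := (Complex.nonneg_iff.1 hdet).1
  simp only [submatrix_apply, cons_val_zero, cons_val_one, cons_val_fin_one, hji,
    RCLike.star_def, Complex.sub_re, Complex.mul_re, hii, zero_mul, sub_zero, Complex.conj_re,
    Complex.conj_im, mul_neg, sub_neg_eq_add, sub_nonneg] at this
  rw [Complex.sq_norm, Complex.normSq_apply]
  linarith

variable {n : Type*} [Fintype n]

theorem PosSemidef.re_trace_nonneg {A : Matrix n n ℂ} (hA : A.PosSemidef) : 0 ≤ A.trace.re :=
  (Complex.nonneg_iff.1 hA.trace_nonneg).1

theorem PosSemidef.re_apply_le_re_trace {A : Matrix n n ℂ} (hA : A.PosSemidef) (i : n) :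
    (A i i).re ≤ A.trace.re := by
  simpa [trace, Complex.re_sum] using Finset.single_le_sum
    (f := fun j => (A j j).re) (fun j _ => (Complex.nonneg_iff.1 hA.diag_nonneg).1)
    (Finset.mem_univ i)

theorem isClosed_setOf_posSemidef : IsClosed {A : Matrix n n ℂ | A.PosSemidef} := by
  simp only [posSemidef_iff_dotProduct_mulVec, Set.ofPred_and, Set.ofPred_forall]
  refine IsClosed.inter (isClosed_eq (by fun_prop) continuous_id) <|
    isClosed_iInter fun x => isClosed_le continuous_const ?_
  exact continuous_const.dotProduct (continuous_id.matrix_mulVec continuous_const)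

theorem PosSemidef.tsum {ι : Type*} {f : ι → Matrix n n ℂ} (hf : ∀ i, (f i).PosSemidef) :
    (∑' i, f i).PosSemidef := by
  by_cases hs : Summable f
  · exact isClosed_setOf_posSemidef.mem_of_tendsto hs.hasSum <|
      Eventually.of_forall fun s => posSemidef_sum s fun i _ => hf i
  · rw [tsum_eq_zero_of_not_summable hs]; exact .zero

attribute [local instance] Matrix.normedAddCommGroup Matrix.normedSpace

theorem PosSemidef.norm_le_re_trace {A : Matrix n n ℂ} (hA : A.PosSemidef) :
    ‖A‖ ≤ A.trace.re := by
  refine (norm_le_iff hA.re_trace_nonneg).2 fun i j => ?_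
  refine pow_le_pow_iff_left₀ (norm_nonneg _) hA.re_trace_nonneg two_ne_zero |>.1 ?_
  calc ‖A i j‖ ^ 2 ≤ (A i i).re * (A j j).re := hA.norm_apply_sq_le i j
    _ ≤ A.trace.re ^ 2 := by
      rw [sq]
      exact mul_le_mul (hA.re_apply_le_re_trace i) (hA.re_apply_le_re_trace j)
        (Complex.nonneg_iff.1 hA.diag_nonneg).1 hA.re_trace_nonneg

variable [DecidableEq n]

theorem PosSemidef.mul_eq_zero_of_conjTranspose_mul_mul_eq_zero {A P : Matrix n n ℂ}
    (hA : A.PosSemidef) (h : Pᴴ * A * P = 0) : A * P = 0 := by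
  obtain ⟨B, rfl⟩ : ∃ B : Matrix n n ℂ, A = Bᴴ * B := by
    open scoped MatrixOrder in exact CStarAlgebra.nonneg_iff_eq_star_mul_self.1 hA.nonneg
  have hBP : B * P = 0 := conjTranspose_mul_self_eq_zero.1 <| by
    rw [conjTranspose_mul, ← h]; noncomm_ring
  rw [Matrix.mul_assoc, hBP, Matrix.mul_zero]

theorem PosSemidef.mul_mul_eq_of_le_smul {A ρ Q : Matrix n n ℂ} (hρ : ρ.PosSemidef)
    (hQ : Qᴴ = Q) (hQA : Q * A = A) {c : ℝ} (hle : (c • A - ρ).PosSemidef) :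
    Q * ρ * Q = ρ := by
  set P := 1 - Q with hP
  have hPA : Pᴴ * A * P = 0 := by simp [P, hQ, sub_mul, hQA]
  clear_value P
  have htrace : (Pᴴ * ρ * P).trace.re ≤ 0 := by
    have := (hle.conjTranspose_mul_mul_same P).re_trace_nonneg
    rw [Matrix.mul_sub, Matrix.sub_mul, Matrix.mul_smul, Matrix.smul_mul, hPA, smul_zero,
      zero_sub, trace_neg, Complex.neg_re] at this
    linarith
  have hPρP : Pᴴ * ρ * P = 0 := by
    have hpsd := hρ.conjTranspose_mul_mul_same P
    refine hpsd.trace_eq_zero_iff.1 (Complex.ext ?_ ?_)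
    · exact le_antisymm htrace hpsd.re_trace_nonneg
    · exact (Complex.nonneg_iff.1 hpsd.trace_nonneg).2.symm
  have hρQ : ρ * Q = ρ := by
    have := hρ.mul_eq_zero_of_conjTranspose_mul_mul_eq_zero hPρP
    rwa [hP, Matrix.mul_sub, Matrix.mul_one, sub_eq_zero, eq_comm] at this
  have hQρ : Q * ρ = ρ := by
    simpa [hQ, hρ.1.eq] using congrArg (·ᴴ) hρQ
  rw [hQρ, hρQ]

theorem PosSemidef.exists_support_projection {A : Matrix n n ℂ} (hA : A.PosSemidef) :
    ∃ Q : Matrix n n ℂ, Qᴴ = Q ∧ Q * Q = Q ∧ Q * A = A ∧ ∃ c : ℝ, (c • A - Q).PosSemidef := by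
  set φ := Unitary.conjStarAlgAut ℂ _ hA.1.eigenvectorUnitary
  set ev := hA.1.eigenvalues
  have hφ : ∀ w : n → ℝ, 0 ≤ w → (φ (diagonal fun i => (w i : ℂ))).PosSemidef := fun w hw =>
    (posSemidef_diagonal_iff.2 fun i => by simpa using hw i).mul_mul_conjTranspose_same _
  have hA' : A = φ (diagonal fun i => (ev i : ℂ)) := hA.1.spectral_theorem
  -- `ev i * (ev i)⁻¹` is the indicator of `ev i ≠ 0`, as `0⁻¹ = 0`
  refine ⟨φ (diagonal fun i => ((ev i * (ev i)⁻¹ : ℝ) : ℂ)), ?_, ?_, ?_, ∑ i, (ev i)⁻¹, ?_⟩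
  · rw [← star_eq_conjTranspose, ← map_star, star_eq_conjTranspose, diagonal_conjTranspose]
    congr 2; ext i; simp
  · rw [← map_mul, diagonal_mul_diagonal]
    congr 2; ext i; push_cast
    rcases eq_or_ne (ev i) 0 with h | h <;> simp [h]
  · rw [hA', ← map_mul, diagonal_mul_diagonal]
    congr 2; ext i; push_cast
    rcases eq_or_ne (ev i) 0 with h | h <;> simp [h]
  · have hev : ∀ i, 0 ≤ ev i := hA.eigenvalues_nonneg
    have hsub : (∑ i, (ev i)⁻¹) • A - φ (diagonal fun i => ((ev i * (ev i)⁻¹ : ℝ) : ℂ)) =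
        φ (diagonal fun i => (((∑ j, (ev j)⁻¹) * ev i - ev i * (ev i)⁻¹ : ℝ) : ℂ)) := by
      rw [hA', ← Complex.coe_smul, ← map_smul, ← map_sub, ← diagonal_smul, diagonal_sub]
      congr 2; ext i; simp only [Pi.smul_apply, smul_eq_mul]; push_cast; ring
    rw [hsub]
    refine hφ _ fun i => ?_
    rcases eq_or_ne (ev i) 0 with h | h
    · simp [h]
    · have : (ev i)⁻¹ ≤ ∑ j, (ev j)⁻¹ :=
        Finset.single_le_sum (fun j _ => inv_nonneg.2 (hev j)) (Finset.mem_univ i)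
      have hpos : 0 < ev i := (hev i).lt_of_ne' h
      rw [mul_inv_cancel₀ h, Pi.zero_apply, sub_nonneg]
      calc (1 : ℝ) = (ev i)⁻¹ * ev i := (inv_mul_cancel₀ h).symm
        _ ≤ _ := mul_le_mul_of_nonneg_right this hpos.le

end Matrix

theorem HasSum.re_trace {n ι : Type*} [Fintype n] {f : ι → Matrix n n ℂ} {a : Matrix n n ℂ}
    (h : HasSum f a) : HasSum (fun i => (f i).trace.re) a.trace.re :=
  Complex.hasSum_re (h.map (traceAddMonoidHom n ℂ) (continuous_id.matrix_trace))

section PositiveMap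

theorem posSemidef_pow_apply {n : Type*} {Φ : Matrix n n ℂ →ₗ[ℂ] Matrix n n ℂ}
    (hΦ : ∀ σ, σ.PosSemidef → (Φ σ).PosSemidef) {σ : Matrix n n ℂ}
    (hσ : σ.PosSemidef) (k : ℕ) : ((Φ ^ k) σ).PosSemidef := by
  induction k with
  | zero => simpa using hσ
  | succ k ih => rw [pow_succ', Module.End.mul_apply]; exact hΦ _ ih

variable {n : Type*} [Fintype n] (Φ : Matrix n n ℂ →ₗ[ℂ] Matrix n n ℂ)

def terminatingCone : PointedCone ℝ (Matrix n n ℂ) where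
  carrier := {ρ | ρ.PosSemidef ∧ Tendsto (fun k => ((Φ ^ k) ρ).trace.re) atTop (𝓝 0)}
  add_mem' {ρ σ} hρ hσ := ⟨hρ.1.add hσ.1, by simpa using hρ.2.add hσ.2⟩
  zero_mem' := ⟨.zero, by simp⟩
  smul_mem' c ρ hρ := by
    refine ⟨by simpa [Nonneg.mk_smul] using hρ.1.smul c.2, ?_⟩
    have := hρ.2.const_mul (c : ℝ)
    rw [mul_zero] at this
    refine this.congr fun k => ?_
    rw [← Nonneg.coe_smul, LinearMap.map_smul_of_tower, trace_smul, Complex.smul_re, smul_eq_mul]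

variable {Φ}

theorem re_trace_pow_apply_le (hΦ : ∀ σ, σ.PosSemidef → (Φ σ).PosSemidef)
    {ρ σ : Matrix n n ℂ} {c : ℝ} (h : (c • ρ - σ).PosSemidef) (k : ℕ) :
    ((Φ ^ k) σ).trace.re ≤ c * ((Φ ^ k) ρ).trace.re := by
  have := (posSemidef_pow_apply hΦ h k).re_trace_nonneg
  rw [map_sub, LinearMap.map_smul_of_tower, trace_sub, trace_smul, Complex.sub_re,
    Complex.smul_re, smul_eq_mul] at this
  linarith

theorem mem_terminatingCone_of_le (hΦ : ∀ σ, σ.PosSemidef → (Φ σ).PosSemidef)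
    {ρ σ : Matrix n n ℂ} (hρ : ρ ∈ terminatingCone Φ) (hσ : σ.PosSemidef) {c : ℝ}
    (h : (c • ρ - σ).PosSemidef) : σ ∈ terminatingCone Φ :=
  ⟨hσ, squeeze_zero (fun k => (posSemidef_pow_apply hΦ hσ k).re_trace_nonneg)
    (re_trace_pow_apply_le hΦ h) (by simpa using hρ.2.const_mul c)⟩

theorem pow_apply_mem_terminatingCone (hΦ : ∀ σ, σ.PosSemidef → (Φ σ).PosSemidef)
    {ρ : Matrix n n ℂ} (hρ : ρ ∈ terminatingCone Φ) (k : ℕ) :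
    (Φ ^ k) ρ ∈ terminatingCone Φ := by
  refine ⟨posSemidef_pow_apply hΦ hρ.1 k, (hρ.2.comp (tendsto_add_atTop_nat k)).congr fun j => ?_⟩
  simp [pow_add, Module.End.mul_apply]

attribute [local instance] Matrix.normedAddCommGroup Matrix.normedSpace

theorem exists_re_trace_pow_le_half (hΦ : ∀ σ, σ.PosSemidef → (Φ σ).PosSemidef) :
    ∃ p, 0 < p ∧ ∀ σ ∈ terminatingCone Φ, ((Φ ^ p) σ).trace.re ≤ 1 / 2 * σ.trace.re := by
  obtain ⟨u, hu, C, hC⟩ := (terminatingCone Φ).exists_smul_norm_sub_mem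
  obtain ⟨p, hp⟩ := eventually_atTop.1 <|
    (hu.2.const_mul C).eventually_le_const (by norm_num : C * 0 < 1 / 2)
  refine ⟨p + 1, p.succ_pos, fun σ hσ => ?_⟩
  calc ((Φ ^ (p + 1)) σ).trace.re ≤ (C * ‖σ‖) * ((Φ ^ (p + 1)) u).trace.re :=
        re_trace_pow_apply_le hΦ (hC σ hσ).1 _
    _ = ‖σ‖ * (C * ((Φ ^ (p + 1)) u).trace.re) := by ring
    _ ≤ ‖σ‖ * (1 / 2) := mul_le_mul_of_nonneg_left (hp _ p.le_succ) (norm_nonneg _)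
    _ ≤ 1 / 2 * σ.trace.re := by rw [mul_comm]; gcongr; exact hσ.1.norm_le_re_trace

theorem summable_pow_apply (hΦ : ∀ σ, σ.PosSemidef → (Φ σ).PosSemidef) {ρ : Matrix n n ℂ}
    (hρ : ρ ∈ terminatingCone Φ) : Summable fun k => (Φ ^ k) ρ := by
  obtain ⟨p, hp, hhalf⟩ := exists_re_trace_pow_le_half hΦ
  have htrace : Summable fun k => ((Φ ^ k) ρ).trace.re :=
    summable_of_add_le_mul (r := 1 / 2)
      (fun k => (posSemidef_pow_apply hΦ hρ.1 k).re_trace_nonneg) hp (by norm_num) (by norm_num)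
      fun k => by
        rw [add_comm, pow_add, Module.End.mul_apply]
        exact hhalf _ (pow_apply_mem_terminatingCone hΦ hρ k)
  exact htrace.of_norm_bounded fun k => (posSemidef_pow_apply hΦ hρ.1 k).norm_le_re_trace

end PositiveMap

section Dual

variable {n : Type*} [Fintype n] {Φ : Matrix n n ℂ →ₗ[ℂ] Matrix n n ℂ}
  {Ψ : Matrix n n ℂ → Matrix n n ℂ}

theorem trace_iterate_mul (hdual : ∀ X σ, (Ψ X * σ).trace = (X * Φ σ).trace)
    (X σ : Matrix n n ℂ) (k : ℕ) : (Ψ^[k] X * σ).trace = (X * (Φ ^ k) σ).trace := by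
  induction k generalizing σ with
  | zero => simp
  | succ k ih => rw [Function.iterate_succ_apply', hdual, ih, pow_succ, Module.End.mul_apply]

variable [DecidableEq n]

attribute [local instance] Matrix.normedAddCommGroup Matrix.normedSpace

theorem exists_posSemidef_hasSum_re_trace (hΦ : ∀ σ, σ.PosSemidef → (Φ σ).PosSemidef)
    (hΨ : ∀ X, X.PosSemidef → (Ψ X).PosSemidef)
    (hdual : ∀ X σ, (Ψ X * σ).trace = (X * Φ σ).trace) {G : Matrix n n ℂ} (hG : G.PosSemidef) :
    ∃ B : Matrix n n ℂ, B.PosSemidef ∧ ∀ ρ ∈ terminatingCone Φ,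
      HasSum (fun k => (G * (Φ ^ k) ρ).trace.re) (B * ρ).trace.re := by
  obtain ⟨u, hu, C, hC⟩ := (terminatingCone Φ).exists_smul_norm_sub_mem
  obtain ⟨Q, hQH, hQQ, hQu, c, hc⟩ := hu.1.exists_support_projection
  have hQ : Q ∈ terminatingCone Φ := by
    refine mem_terminatingCone_of_le hΦ hu ?_ hc
    simpa [hQH, hQQ] using posSemidef_conjTranspose_mul_self Q
  set D : ℕ → Matrix n n ℂ := fun k => Q * Ψ^[k] G * Q
  have hD : ∀ k, (D k).PosSemidef := fun k => by
    simpa [hQH] using (Function.Iterate.rec PosSemidef hG hΨ k).conjTranspose_mul_mul_same Q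
  have hDtrace : ∀ k σ, (D k * σ).trace = (G * (Φ ^ k) (Q * σ * Q)).trace := fun k σ => by
    rw [← trace_iterate_mul hdual]
    simp only [D, Matrix.mul_assoc]
    rw [trace_mul_comm]
    simp only [Matrix.mul_assoc]
  have hDsum : Summable D := by
    refine ((summable_pow_apply hΦ hQ).hasSum.mul_left G).re_trace.summable.of_norm_bounded
      fun k => ?_
    calc ‖D k‖ ≤ (D k).trace.re := (hD k).norm_le_re_trace
      _ = (G * (Φ ^ k) Q).trace.re := by
        rw [← Matrix.mul_one (D k), hDtrace, Matrix.mul_one, hQQ]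
  refine ⟨∑' k, D k, .tsum hD, fun ρ hρ => ?_⟩
  have hρQ : Q * ρ * Q = ρ := hρ.1.mul_mul_eq_of_le_smul hQH hQu (hC ρ hρ).1
  simpa [hDtrace, hρQ] using (hDsum.hasSum.mul_right ρ).re_trace

end Dual

section Loop

variable {d m : ℕ} (N : Fin m → Matrix (Fin d) (Fin d) ℂ) (M₀ M₁ : Matrix (Fin d) (Fin d) ℂ)

noncomputable def loopStepLinearMap : Matrix (Fin d) (Fin d) ℂ →ₗ[ℂ] Matrix (Fin d) (Fin d) ℂ where
  toFun := loopStep N M₁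
  map_add' σ τ := by simp [loopStep, Matrix.mul_add, Matrix.add_mul, Finset.sum_add_distrib]
  map_smul' c σ := by simp [loopStep, Finset.smul_sum]

theorem loopStepLinearMap_pow_apply (k : ℕ) (σ : Matrix (Fin d) (Fin d) ℂ) :
    (loopStepLinearMap N M₁ ^ k) σ = (loopStep N M₁)^[k] σ :=
  Module.End.pow_apply _ k σ

theorem loopStepLinearMap_posSemidef {σ : Matrix (Fin d) (Fin d) ℂ} (hσ : σ.PosSemidef) :
    (loopStepLinearMap N M₁ σ).PosSemidef :=
  posSemidef_sum _ fun i _ => (hσ.mul_mul_conjTranspose_same M₁).mul_mul_conjTranspose_same (N i)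

noncomputable def loopStepDual (X : Matrix (Fin d) (Fin d) ℂ) : Matrix (Fin d) (Fin d) ℂ :=
  M₁ᴴ * (∑ i, (N i)ᴴ * X * N i) * M₁

theorem loopStepDual_posSemidef {X : Matrix (Fin d) (Fin d) ℂ} (hX : X.PosSemidef) :
    (loopStepDual N M₁ X).PosSemidef :=
  (posSemidef_sum _ fun i _ => hX.conjTranspose_mul_mul_same (N i)).conjTranspose_mul_mul_same M₁

theorem trace_loopStepDual_mul (X σ : Matrix (Fin d) (Fin d) ℂ) :
    (loopStepDual N M₁ X * σ).trace = (X * loopStep N M₁ σ).trace := by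
  simp only [loopStepDual, loopStep, Matrix.mul_sum, Matrix.sum_mul, trace_sum]
  refine Finset.sum_congr rfl fun i _ => ?_
  simp only [Matrix.mul_assoc]
  rw [trace_mul_comm, Matrix.mul_assoc, trace_mul_comm]
  simp only [Matrix.mul_assoc]

theorem trace_loopStep (hN : ∑ i, (N i)ᴴ * N i = 1) (hM : M₀ᴴ * M₀ + M₁ᴴ * M₁ = 1)
    (σ : Matrix (Fin d) (Fin d) ℂ) :
    (loopStep N M₁ σ).trace = σ.trace - (M₀ * σ * M₀ᴴ).trace := by
  rw [loopStep, eq_sub_iff_add_eq, trace_sum]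
  simp only [trace_mul_cycle (N _), ← trace_sum, ← Finset.sum_mul, hN, Matrix.one_mul]
  rw [trace_mul_cycle, trace_mul_cycle M₀, ← trace_add, ← Matrix.add_mul, add_comm, hM,
    Matrix.one_mul]

theorem mem_terminatingCone_loopStep (hN : ∑ i, (N i)ᴴ * N i = 1)
    (hM : M₀ᴴ * M₀ + M₁ᴴ * M₁ = 1) {ρ : Matrix (Fin d) (Fin d) ℂ} (hρ : ρ.PosSemidef)
    (hterm : ∑' k, (M₀ * (loopStep N M₁)^[k] ρ * M₀ᴴ).trace.re = ρ.trace.re) :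
    ρ ∈ terminatingCone (loopStepLinearMap N M₁) := by
  have hpsd := posSemidef_pow_apply (fun _ => loopStepLinearMap_posSemidef N M₁) hρ
  refine ⟨hρ, tendsto_zero_of_tsum_eq_of_sub_succ (fun k => (hpsd k).re_trace_nonneg)
    (fun k => ((hpsd k).mul_mul_conjTranspose_same M₀).re_trace_nonneg) (fun k => ?_) ?_⟩
  · rw [pow_succ', Module.End.mul_apply]
    exact congrArg Complex.re (trace_loopStep N M₀ M₁ hN hM _) |>.trans (Complex.sub_re _ _)
  · simpa only [loopStepLinearMap_pow_apply, pow_zero, Module.End.one_apply] using hterm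

end Loop

theorem runtime_observable_of_loop_general
    (d m : ℕ)
    (N : Fin m → Matrix (Fin d) (Fin d) ℂ)
    (hN : ∑ i, (N i)ᴴ * N i = 1)
    (M₀ M₁ : Matrix (Fin d) (Fin d) ℂ)
    (hM : M₀ᴴ * M₀ + M₁ᴴ * M₁ = 1)
    (A : Matrix (Fin d) (Fin d) ℂ) (hA : A.PosSemidef) :
    ∃ B : Matrix (Fin d) (Fin d) ℂ, B.PosSemidef ∧
      ∀ ρ : Matrix (Fin d) (Fin d) ℂ, ρ.PosSemidef →
        (∑' k : ℕ, ((M₀ * ((loopStep N M₁)^[k] ρ) * M₀ᴴ).trace).re = ρ.trace.re) →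
        Summable (fun k : ℕ => (((loopStep N M₁)^[k] ρ).trace).re) ∧
        Summable (fun k : ℕ =>
          ((A * (M₁ * ((loopStep N M₁)^[k] ρ) * M₁ᴴ)).trace).re) ∧
        (∑' k : ℕ, (((loopStep N M₁)^[k] ρ).trace).re) +
            (∑' k : ℕ, ((A * (M₁ * ((loopStep N M₁)^[k] ρ) * M₁ᴴ)).trace).re)
          = ((B * ρ).trace).re := by
  obtain ⟨B₁, hB₁, h₁⟩ := exists_posSemidef_hasSum_re_trace
    (fun _ => loopStepLinearMap_posSemidef N M₁) (fun _ => loopStepDual_posSemidef N M₁)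
    (trace_loopStepDual_mul N M₁) PosSemidef.one
  obtain ⟨B₂, hB₂, h₂⟩ := exists_posSemidef_hasSum_re_trace
    (fun _ => loopStepLinearMap_posSemidef N M₁) (fun _ => loopStepDual_posSemidef N M₁)
    (trace_loopStepDual_mul N M₁) (hA.conjTranspose_mul_mul_same M₁)
  refine ⟨B₁ + B₂, hB₁.add hB₂, fun ρ hρ hterm => ?_⟩
  have hρT := mem_terminatingCone_loopStep N M₀ M₁ hN hM hρ hterm
  have e₁ : HasSum (fun k => ((loopStep N M₁)^[k] ρ).trace.re) (B₁ * ρ).trace.re := by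
    simpa only [loopStepLinearMap_pow_apply, Matrix.one_mul] using h₁ ρ hρT
  have e₂ : HasSum (fun k => (A * (M₁ * (loopStep N M₁)^[k] ρ * M₁ᴴ)).trace.re)
      (B₂ * ρ).trace.re := by
    have hcycle : ∀ X, (A * (M₁ * X * M₁ᴴ)).trace = (M₁ᴴ * A * M₁ * X).trace := fun X => by
      simp only [Matrix.mul_assoc]
      rw [trace_mul_comm M₁ᴴ]
      simp only [Matrix.mul_assoc]
    simpa only [hcycle, loopStepLinearMap_pow_apply] using h₂ ρ hρT
  exact ⟨e₁.summable, e₂.summable, by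
    rw [e₁.tsum_eq, e₂.tsum_eq, Matrix.add_mul, trace_add, Complex.add_re]⟩

/-- Observable representation of the expected runtime of a quantum while-loop:
there is a single positive operator `B` such that on every almost-surely-terminating
input `ρ`, the expected runtime equals `tr(B ρ)`. -/
theorem runtime_observable_of_loop
    (d m : ℕ) (hd : 1 ≤ d) (hm : 1 ≤ m)
    (N : Fin m → Matrix (Fin d) (Fin d) ℂ)
    (hN : ∑ i, (N i)ᴴ * N i = 1)
    (M₀ M₁ : Matrix (Fin d) (Fin d) ℂ)
    (hM : M₀ᴴ * M₀ + M₁ᴴ * M₁ = 1)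
    (A : Matrix (Fin d) (Fin d) ℂ) (hA : A.PosSemidef) :
    ∃ B : Matrix (Fin d) (Fin d) ℂ, B.PosSemidef ∧
      ∀ ρ : Matrix (Fin d) (Fin d) ℂ, ρ.PosSemidef →
        (∑' k : ℕ, ((M₀ * ((loopStep N M₁)^[k] ρ) * M₀ᴴ).trace).re = ρ.trace.re) →
        Summable (fun k : ℕ => (((loopStep N M₁)^[k] ρ).trace).re) ∧
        Summable (fun k : ℕ =>
          ((A * (M₁ * ((loopStep N M₁)^[k] ρ) * M₁ᴴ)).trace).re) ∧
        (∑' k : ℕ, (((loopStep N M₁)^[k] ρ).trace).re) +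
            (∑' k : ℕ, ((A * (M₁ * ((loopStep N M₁)^[k] ρ) * M₁ᴴ)).trace).re)
          = ((B * ρ).trace).re :=
  runtime_observable_of_loop_general d m N hN M₀ M₁ hM A hA
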